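/- arXiv:2301.07963 — 3 statements merged into one kernel-verified Lean document; each statement's English description precedes it below -/
import Mathlib

section
/- Let $(\mathcal{A},\delta)$ be a geodesic metric space of atoms. Let $\mu_0 = \sum_{j=1}^J \lambda_0^j a_0^j$ and $\mu_1 = \sum_{k=1}^K \lambda_1^k a_1^k$ be two finite mixtures, let $w^*$ be an optimal discrete coupling achieving $\delta_{\mathcal{M},p}(\mu_0,\mu_1)$, and for each $(j,k)$ let $(a_t^{jk})_{t\in[0,1]}$ be a constant-speed geodesic in $\mathcal{A}$ from $a_0^j$ to $a_1^k$. Then the path $\mu_t = \sum_{j,k} w^*_{jk} a_t^{jk}$ satisfies $\delta_{\mathcal{M},p}(\mu_s, \mu_t) \le |t-s|\, \delta_{\mathcal{M},p}(\mu_0,\mu_1)$ for all $s,t \in [0,1]$; consequently $(\mu_t)$ is a constant-speed geodesic and $(\mathcal{M}(\mathcal{A}), \delta_{\mathcal{M},p})$ is a geodesic space. -/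
/-! Every coupling bounds `δ_{M,p}` from above. Between `μ_s` and `μ_t`, which carry the same
weights `w*`, take the diagonal coupling: since each `a^{jk}` has constant speed, its cost is
`|t - s|^p` times the optimal cost between `μ_0` and `μ_1`. -/

open Finset Set

/-- The mixture Wasserstein-type distance `δ_{M,p}` between two finite mixtures. -/
noncomputable def mixDist {A : Type*} (δ : A → A → ℝ) (p : ℝ)
    {ι κ : Type*} [Fintype ι] [Fintype κ]
    (lam0 : ι → ℝ) (a0 : ι → A) (lam1 : κ → ℝ) (a1 : κ → A) : ℝ :=
  sInf { s : ℝ | ∃ w : ι → κ → ℝ,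
    (∀ j k, 0 ≤ w j k) ∧ (∀ j, ∑ k, w j k = lam0 j) ∧ (∀ k, ∑ j, w j k = lam1 k) ∧
    s = (∑ j, ∑ k, w j k * δ (a0 j) (a1 k) ^ p) ^ (1 / p) }

section MixDist

variable {A : Type*} {δ : A → A → ℝ} {p : ℝ} {ι κ : Type*} [Fintype ι] [Fintype κ]

theorem mixDist_le_of_coupling (hδ : ∀ a b, 0 ≤ δ a b) {lam0 : ι → ℝ} {a0 : ι → A}
    {lam1 : κ → ℝ} {a1 : κ → A} {w : ι → κ → ℝ} (hw_nonneg : ∀ j k, 0 ≤ w j k)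
    (hw_left : ∀ j, ∑ k, w j k = lam0 j) (hw_right : ∀ k, ∑ j, w j k = lam1 k) :
    mixDist δ p lam0 a0 lam1 a1 ≤ (∑ j, ∑ k, w j k * δ (a0 j) (a1 k) ^ p) ^ (1 / p) := by
  refine csInf_le ⟨0, ?_⟩ ⟨w, hw_nonneg, hw_left, hw_right, rfl⟩
  rintro x ⟨w', hw', -, -, rfl⟩
  exact Real.rpow_nonneg (sum_nonneg fun j _ => sum_nonneg fun k _ =>
    mul_nonneg (hw' j k) (Real.rpow_nonneg (hδ _ _) p)) _

theorem mixDist_same_weights_le (hδ : ∀ a b, 0 ≤ δ a b) {m : ι → ℝ} (hm : ∀ i, 0 ≤ m i)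
    (b c : ι → A) :
    mixDist δ p m b m c ≤ (∑ i, m i * δ (b i) (c i) ^ p) ^ (1 / p) := by
  classical
  have hdiag := mixDist_le_of_coupling (p := p) (lam0 := m) (lam1 := m) (a0 := b) (a1 := c) hδ
    (w := fun i j => if i = j then m i else 0)
    (fun i j => by split_ifs <;> simp [hm]) (fun i => by simp) (fun j => by simp)
  simpa [ite_mul] using hdiag

end MixDist

theorem stmt_2_general {A : Type*} (δ : A → A → ℝ) (p : ℝ) (hp : 1 < p)
    (hδ_nonneg : ∀ a b, 0 ≤ δ a b)
    {J K : ℕ}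
    (lam0 : Fin J → ℝ) (a0 : Fin J → A)
    (lam1 : Fin K → ℝ) (a1 : Fin K → A)
    (w : Fin J → Fin K → ℝ)
    (hw : (∀ j k, 0 ≤ w j k) ∧ (∀ j, ∑ k, w j k = lam0 j) ∧ (∀ k, ∑ j, w j k = lam1 k))
    (hopt : (∑ j, ∑ k, w j k * δ (a0 j) (a1 k) ^ p) ^ (1 / p)
      = mixDist δ p lam0 a0 lam1 a1)
    (a : Fin J → Fin K → ℝ → A)
    (hgeo : ∀ j k, ∀ s ∈ Icc (0:ℝ) 1, ∀ t ∈ Icc (0:ℝ) 1,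
      δ (a j k s) (a j k t) = |t - s| * δ (a0 j) (a1 k)) :
    ∀ s ∈ Icc (0:ℝ) 1, ∀ t ∈ Icc (0:ℝ) 1,
      mixDist δ p (fun jk : Fin J × Fin K => w jk.1 jk.2) (fun jk => a jk.1 jk.2 s)
          (fun jk : Fin J × Fin K => w jk.1 jk.2) (fun jk => a jk.1 jk.2 t)
        ≤ |t - s| * mixDist δ p lam0 a0 lam1 a1 := by
  intro s hs t ht
  have hcost_nonneg : 0 ≤ ∑ j, ∑ k, w j k * δ (a0 j) (a1 k) ^ p :=
    sum_nonneg fun j _ => sum_nonneg fun k _ =>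
      mul_nonneg (hw.1 j k) (Real.rpow_nonneg (hδ_nonneg _ _) p)
  calc _ ≤ (∑ jk : Fin J × Fin K, w jk.1 jk.2 * δ (a jk.1 jk.2 s) (a jk.1 jk.2 t) ^ p)
          ^ (1 / p) := mixDist_same_weights_le hδ_nonneg (fun jk : Fin J × Fin K => hw.1 jk.1 jk.2) _ _
    _ = (|t - s| ^ p * ∑ j, ∑ k, w j k * δ (a0 j) (a1 k) ^ p) ^ (1 / p) := by
      simp only [Fintype.sum_prod_type, mul_sum, hgeo _ _ s hs t ht,
        Real.mul_rpow (abs_nonneg _) (hδ_nonneg _ _), mul_left_comm]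
    _ = |t - s| * mixDist δ p lam0 a0 lam1 a1 := by
      rw [Real.mul_rpow (Real.rpow_nonneg (abs_nonneg _) p) hcost_nonneg,
        ← Real.rpow_mul (abs_nonneg _), mul_one_div_cancel (by linarith), Real.rpow_one, hopt]

/-- If `(A,δ)` is a geodesic metric space of atoms, `w*` is an optimal discrete coupling
between the mixtures `μ0 = ∑ λ0^j a0^j` and `μ1 = ∑ λ1^k a1^k`, and `(a_t^{jk})` are
constant-speed geodesics from `a0^j` to `a1^k`, then the mixture path
`μ_t = ∑_{j,k} w*_{jk} a_t^{jk}` satisfies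
`δ_{M,p}(μ_s,μ_t) ≤ |t-s| δ_{M,p}(μ0,μ1)`, i.e. it is a constant-speed geodesic. -/
theorem stmt_2 {A : Type*} (δ : A → A → ℝ) (p : ℝ) (hp : 1 < p)
    (hδ_nonneg : ∀ a b, 0 ≤ δ a b) (hδ_symm : ∀ a b, δ a b = δ b a)
    (hδ_eq : ∀ a b, δ a b = 0 ↔ a = b)
    (hδ_tri : ∀ a b c, δ a c ≤ δ a b + δ b c)
    {J K : ℕ}
    (lam0 : Fin J → ℝ) (a0 : Fin J → A)
    (lam1 : Fin K → ℝ) (a1 : Fin K → A)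
    (h0 : (∀ j, 0 ≤ lam0 j) ∧ ∑ j, lam0 j = 1)
    (h1 : (∀ k, 0 ≤ lam1 k) ∧ ∑ k, lam1 k = 1)
    (w : Fin J → Fin K → ℝ)
    (hw : (∀ j k, 0 ≤ w j k) ∧ (∀ j, ∑ k, w j k = lam0 j) ∧ (∀ k, ∑ j, w j k = lam1 k))
    (hopt : (∑ j, ∑ k, w j k * δ (a0 j) (a1 k) ^ p) ^ (1 / p)
      = mixDist δ p lam0 a0 lam1 a1)
    (a : Fin J → Fin K → ℝ → A)
    (ha0 : ∀ j k, a j k 0 = a0 j) (ha1 : ∀ j k, a j k 1 = a1 k)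
    (hgeo : ∀ j k, ∀ s ∈ Icc (0:ℝ) 1, ∀ t ∈ Icc (0:ℝ) 1,
      δ (a j k s) (a j k t) = |t - s| * δ (a0 j) (a1 k)) :
    ∀ s ∈ Icc (0:ℝ) 1, ∀ t ∈ Icc (0:ℝ) 1,
      mixDist δ p (fun jk : Fin J × Fin K => w jk.1 jk.2) (fun jk => a jk.1 jk.2 s)
          (fun jk : Fin J × Fin K => w jk.1 jk.2) (fun jk => a jk.1 jk.2 t)
        ≤ |t - s| * mixDist δ p lam0 a0 lam1 a1 :=
  stmt_2_general δ p hp hδ_nonneg lam0 a0 lam1 a1 w hw hopt a hgeo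
end

section
/- Let $\Omega \subset \mathbb{R}^d$ be convex with Euclidean cost $c(x,y) = \|x-y\|$, and let $S: \Omega \to \Omega$ be a measurable map which is an isometry ($c(S(x),S(y)) = c(x,y)$) and commutes with convex combinations ($S(\sum_i t_i x_i) = \sum_i t_i S(x_i)$ for barycentric weights $t$). Let $\mu_1,\ldots,\mu_n$ be probability measures invariant under $S$, and suppose the associated multi-marginal problem with cost $C(x_1,\ldots,x_n) = \sum_{i,j} t_i t_j c(x_i,x_j)^p$ has a unique optimal plan. Then the $p$-Wasserstein barycenter $\nu$ of $\mu_1,\ldots,\mu_n$ with weights $(t_1,\ldots,t_n)$ is also invariant under $S$: $S\#\nu = \nu$. -/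
/-!
Pushing a coupling of `ν` and `μᵢ` forward by `S × S` gives a coupling of `S#ν` and
`S#μᵢ = μᵢ` with the same cost, since `S` is an isometry. Hence
`W_p(S#ν, μᵢ) ≤ W_p(ν, μᵢ)` for every `i`, so `S#ν` is again a barycenter, and it equals `ν`
by uniqueness of the barycenter.
-/

open MeasureTheory ENNReal Finset

/-- The `p`-th power of the `p`-Wasserstein distance (for the distance cost). -/
noncomputable def Wpp {E : Type*} [MeasurableSpace E] [MetricSpace E]
    (p : ℝ) (μ ν : Measure E) : ℝ≥0∞ :=
  ⨅ (γ : Measure (E × E)) (_ : γ.map Prod.fst = μ ∧ γ.map Prod.snd = ν),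
    ∫⁻ z, ENNReal.ofReal (dist z.1 z.2 ^ p) ∂γ

namespace MeasureTheory.Measure

variable {α β γ δ : Type*} [MeasurableSpace α] [MeasurableSpace β] [MeasurableSpace γ]
  [MeasurableSpace δ] {f : α → γ} {g : β → δ}

theorem map_fst_map_prodMap (hf : Measurable f) (hg : Measurable g) (π : Measure (α × β)) :
    (π.map (Prod.map f g)).map Prod.fst = (π.map Prod.fst).map f := by
  rw [map_map measurable_fst (hf.prodMap hg), map_map hf measurable_fst]
  rfl

theorem map_snd_map_prodMap (hf : Measurable f) (hg : Measurable g) (π : Measure (α × β)) :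
    (π.map (Prod.map f g)).map Prod.snd = (π.map Prod.snd).map g := by
  rw [map_map measurable_snd (hf.prodMap hg), map_map hg measurable_snd]
  rfl

end MeasureTheory.Measure

section

variable {E F : Type*} [MeasurableSpace E] [MetricSpace E] [MeasurableSpace F] [MetricSpace F]

theorem Wpp_map_map_le {S : E → F} (hS : Measurable S) (hS_isom : Isometry S)
    (p : ℝ) (μ ν : Measure E) : Wpp p (μ.map S) (ν.map S) ≤ Wpp p μ ν := by
  refine le_iInf₂ fun π hπ => iInf₂_le_of_le (π.map (Prod.map S S)) ⟨?_, ?_⟩ ?_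
  · rw [Measure.map_fst_map_prodMap hS hS, hπ.1]
  · rw [Measure.map_snd_map_prodMap hS hS, hπ.2]
  · calc ∫⁻ z, ENNReal.ofReal (dist z.1 z.2 ^ p) ∂π.map (Prod.map S S)
        ≤ ∫⁻ z, ENNReal.ofReal (dist (S z.1) (S z.2) ^ p) ∂π := lintegral_map_le _ _
      _ = ∫⁻ z, ENNReal.ofReal (dist z.1 z.2 ^ p) ∂π := by simp only [hS_isom.dist_eq]

theorem Wpp_map_le_of_map_eq {S : E → E} (hS : Measurable S) (hS_isom : Isometry S)
    (p : ℝ) (ν : Measure E) {μ : Measure E} (hμ : μ.map S = μ) :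
    Wpp p (ν.map S) μ ≤ Wpp p ν μ := by
  simpa only [hμ] using Wpp_map_map_le hS hS_isom p ν μ

end

theorem stmt_11_general {d n : ℕ} (p : ℝ)
    (S : EuclideanSpace ℝ (Fin d) → EuclideanSpace ℝ (Fin d))
    (hS_meas : Measurable S)
    (hS_isom : ∀ x y, dist (S x) (S y) = dist x y)
    (μ : Fin n → Measure (EuclideanSpace ℝ (Fin d)))
    (hμ_inv : ∀ i, (μ i).map S = μ i)
    (t : Fin n → ℝ)
    (ν : Measure (EuclideanSpace ℝ (Fin d))) [IsProbabilityMeasure ν]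
    (hν_min : ∀ ρ : Measure (EuclideanSpace ℝ (Fin d)), IsProbabilityMeasure ρ →
      ∑ i, ENNReal.ofReal (t i) * Wpp p ν (μ i) ≤
        ∑ i, ENNReal.ofReal (t i) * Wpp p ρ (μ i))
    (hν_unique : ∀ ρ : Measure (EuclideanSpace ℝ (Fin d)), IsProbabilityMeasure ρ →
      (∑ i, ENNReal.ofReal (t i) * Wpp p ρ (μ i) =
        ∑ i, ENNReal.ofReal (t i) * Wpp p ν (μ i)) → ρ = ν) :
    ν.map S = ν := by
  have hSν : IsProbabilityMeasure (ν.map S) :=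
    Measure.isProbabilityMeasure_map hS_meas.aemeasurable
  have hcost_le : ∑ i, ENNReal.ofReal (t i) * Wpp p (ν.map S) (μ i) ≤
      ∑ i, ENNReal.ofReal (t i) * Wpp p ν (μ i) :=
    sum_le_sum fun i _ => mul_le_mul_right
      (Wpp_map_le_of_map_eq hS_meas (Isometry.of_dist_eq hS_isom) p ν (hμ_inv i)) _
  exact hν_unique _ hSν (le_antisymm hcost_le (hν_min _ hSν))

/-- If `S` is a measurable isometry of `ℝ^d` commuting with convex combinations, the
measures `μ₁,…,μₙ` are `S`-invariant, and the associated multi-marginal problem with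
cost `∑ tᵢtⱼ ‖xᵢ-xⱼ‖^p` has a unique optimal plan, then the (unique) `p`-Wasserstein
barycenter `ν` of `μ₁,…,μₙ` with weights `t` is `S`-invariant. -/
theorem stmt_11 {d n : ℕ} (p : ℝ) (hp : 1 < p)
    (S : EuclideanSpace ℝ (Fin d) → EuclideanSpace ℝ (Fin d))
    (hS_meas : Measurable S)
    (hS_isom : ∀ x y, dist (S x) (S y) = dist x y)
    (hS_affine : ∀ (m : ℕ) (s : Fin m → ℝ), (∀ i, 0 ≤ s i) → (∑ i, s i) = 1 →
      ∀ x : Fin m → EuclideanSpace ℝ (Fin d),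
        S (∑ i, s i • x i) = ∑ i, s i • S (x i))
    (μ : Fin n → Measure (EuclideanSpace ℝ (Fin d)))
    (hμ_prob : ∀ i, IsProbabilityMeasure (μ i))
    (hμ_inv : ∀ i, (μ i).map S = μ i)
    (t : Fin n → ℝ) (ht : (∀ i, 0 ≤ t i) ∧ ∑ i, t i = 1)
    (γ : Measure (Fin n → EuclideanSpace ℝ (Fin d)))
    (hγ_plan : ∀ q, γ.map (fun x => x q) = μ q)
    (hγ_opt : ∀ γ' : Measure (Fin n → EuclideanSpace ℝ (Fin d)),
      (∀ q, γ'.map (fun x => x q) = μ q) →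
      ∫⁻ x, ∑ i, ∑ j, ENNReal.ofReal (t i * t j * dist (x i) (x j) ^ p) ∂γ ≤
        ∫⁻ x, ∑ i, ∑ j, ENNReal.ofReal (t i * t j * dist (x i) (x j) ^ p) ∂γ')
    (hγ_unique : ∀ γ' : Measure (Fin n → EuclideanSpace ℝ (Fin d)),
      (∀ q, γ'.map (fun x => x q) = μ q) →
      (∫⁻ x, ∑ i, ∑ j, ENNReal.ofReal (t i * t j * dist (x i) (x j) ^ p) ∂γ' =
        ∫⁻ x, ∑ i, ∑ j, ENNReal.ofReal (t i * t j * dist (x i) (x j) ^ p) ∂γ) → γ' = γ)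
    (ν : Measure (EuclideanSpace ℝ (Fin d))) [IsProbabilityMeasure ν]
    (hν_min : ∀ ρ : Measure (EuclideanSpace ℝ (Fin d)), IsProbabilityMeasure ρ →
      ∑ i, ENNReal.ofReal (t i) * Wpp p ν (μ i) ≤
        ∑ i, ENNReal.ofReal (t i) * Wpp p ρ (μ i))
    (hν_unique : ∀ ρ : Measure (EuclideanSpace ℝ (Fin d)), IsProbabilityMeasure ρ →
      (∑ i, ENNReal.ofReal (t i) * Wpp p ρ (μ i) =
        ∑ i, ENNReal.ofReal (t i) * Wpp p ν (μ i)) → ρ = ν) :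
    ν.map S = ν :=
  stmt_11_general p S hS_meas hS_isom μ hμ_inv t ν hν_min hν_unique
end

section
/- Let $S: \Omega \to \Omega$ be a reflection (an isometry for the cost $c$ with $S^2 = \mathrm{Id}$), and suppose $\Omega = \Omega_1 \sqcup \Omega_2$ with $S(\Omega_1) = \Omega_2$ and $S(\Omega_2) = \Omega_1$, and that $c(x,y) \le c(S(x),y)$ whenever $(x,y) \in (\Omega_1\times\Omega_1) \cup (\Omega_2\times\Omega_2)$. Let $\mu_1,\ldots,\mu_n$ be $S$-invariant probability measures and suppose the multi-marginal optimal transport problem with cost $C(x_1,\ldots,x_n) = \sum_{k,l} t_k t_l c(x_k,x_l)^p$ has a unique solution $\gamma$. Then the support of $\gamma$ is contained in $\Omega_1^n \cup \Omega_2^n$. -/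
/-! Fold every point into `Ω₁` by applying `S` off `Ω₁`, and average the folded plan `F#γ`
with its reflection `(S ∘ F)#γ`. Since the marginals are `S`-invariant, this average has the
marginals of `γ`; since folding a pair of points never increases `c` (by the isometry property
and `c(x,y) ≤ c(Sx,y)` on `Ω₁ × Ω₁`), its cost is at most that of `γ`. By uniqueness it is `γ`,
and by construction it lives on `Ω₁ⁿ ∪ (S Ω₁)ⁿ = Ω₁ⁿ ∪ Ω₂ⁿ`. -/

open MeasureTheory ENNReal Finset Set

namespace Reflection

variable {Ω : Type*} {S : Ω → Ω} {A : Set Ω}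

open Classical in
noncomputable def fold (S : Ω → Ω) (A : Set Ω) : Ω → Ω := A.piecewise id S

theorem fold_of_mem {y : Ω} (hy : y ∈ A) : fold S A y = y := by
  classical exact Set.piecewise_eq_of_mem A id S hy

theorem fold_of_notMem {y : Ω} (hy : y ∉ A) : fold S A y = S y := by
  classical exact Set.piecewise_eq_of_notMem A id S hy

theorem fold_mem (hAc : ∀ y ∉ A, S y ∈ A) (y : Ω) : fold S A y ∈ A := by
  by_cases hy : y ∈ A
  · rwa [fold_of_mem hy]
  · rw [fold_of_notMem hy]
    exact hAc y hy

theorem cost_fold_le {β : Type*} [Preorder β] {c : Ω → Ω → β}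
    (hSc : ∀ x y, c (S x) (S y) = c x y) (hSS : Function.Involutive S)
    (hAc : ∀ y ∉ A, S y ∈ A) (hcost : ∀ x ∈ A, ∀ y ∈ A, c x y ≤ c (S x) y) (a b : Ω) :
    c (fold S A a) (fold S A b) ≤ c a b := by
  by_cases ha : a ∈ A <;> by_cases hb : b ∈ A
  · rw [fold_of_mem ha, fold_of_mem hb]
  · rw [fold_of_mem ha, fold_of_notMem hb, ← hSc a b]
    exact hcost a ha (S b) (hAc b hb)
  · rw [fold_of_notMem ha, fold_of_mem hb]
    simpa only [hSS a] using hcost (S a) (hAc a ha) b hb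
  · rw [fold_of_notMem ha, fold_of_notMem hb, hSc]

variable [MeasurableSpace Ω]

theorem measurable_fold (hS : Measurable S) (hA : MeasurableSet A) : Measurable (fold S A) := by
  classical exact measurable_id.piecewise hA hS

theorem map_fold (hS : Measurable S) (hA : MeasurableSet A) (μ : Measure Ω) :
    μ.map (fold S A) = μ.restrict A + (μ.restrict Aᶜ).map S := by
  have h_on : fold S A =ᵐ[μ.restrict A] id :=
    (ae_restrict_mem hA).mono fun _ hy => fold_of_mem hy
  have h_off : fold S A =ᵐ[μ.restrict Aᶜ] S :=
    (ae_restrict_mem hA.compl).mono fun _ hy => fold_of_notMem hy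
  conv_lhs => rw [← Measure.restrict_add_restrict_compl (μ := μ) hA]
  rw [Measure.map_add _ _ (measurable_fold hS hA), Measure.map_congr h_on, Measure.map_id,
    Measure.map_congr h_off]

theorem map_fold_add_map_comp_fold (hS : Measurable S) (hSS : Function.Involutive S)
    (hA : MeasurableSet A) (μ : Measure Ω) :
    μ.map (fold S A) + μ.map (S ∘ fold S A) = μ + μ.map S := by
  have hSS' : S ∘ S = id := funext hSS
  rw [← Measure.map_map hS (measurable_fold hS hA), map_fold hS hA, Measure.map_add _ _ hS,
    Measure.map_map hS hS, hSS', Measure.map_id]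
  conv_rhs => rw [← Measure.restrict_add_restrict_compl (μ := μ) hA, Measure.map_add _ _ hS]
  abel

variable {ι β : Type*} [MeasurableSpace β]

theorem measurable_comp_left {f : Ω → β} (hf : Measurable f) :
    Measurable fun x : ι → Ω => f ∘ x :=
  measurable_pi_lambda _ fun q => hf.comp (measurable_pi_apply q)

theorem map_eval_map_comp_left {f : Ω → β} (hf : Measurable f) (ν : Measure (ι → Ω)) (q : ι) :
    (ν.map (f ∘ ·)).map (fun x => x q) = (ν.map (fun x => x q)).map f := by
  rw [Measure.map_map (measurable_pi_apply q) (measurable_comp_left hf),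
    Measure.map_map hf (measurable_pi_apply q)]
  rfl

noncomputable def foldedPlan (S : Ω → Ω) (A : Set Ω) (γ : Measure (ι → Ω)) : Measure (ι → Ω) :=
  (2 : ℝ≥0∞)⁻¹ • (γ.map (fold S A ∘ ·) + (γ.map (fold S A ∘ ·)).map (S ∘ ·))

theorem map_eval_foldedPlan (hS : Measurable S) (hSS : Function.Involutive S)
    (hA : MeasurableSet A) (γ : Measure (ι → Ω)) (q : ι)
    (hinv : (γ.map (fun x => x q)).map S = γ.map (fun x => x q)) :
    (foldedPlan S A γ).map (fun x => x q) = γ.map (fun x => x q) := by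
  have hf := measurable_fold hS hA
  rw [foldedPlan, Measure.map_smul, Measure.map_add _ _ (measurable_pi_apply q),
    map_eval_map_comp_left hS, map_eval_map_comp_left hf, Measure.map_map hS hf,
    map_fold_add_map_comp_fold hS hSS hA, hinv, ← two_smul ℝ≥0∞, smul_smul,
    ENNReal.inv_mul_cancel two_ne_zero ofNat_ne_top, one_smul]

theorem lintegral_foldedPlan_le (hS : Measurable S) (hA : MeasurableSet A)
    (γ : Measure (ι → Ω)) {C : (ι → Ω) → ℝ≥0∞} (hC : Measurable C)
    (hCS : ∀ x, C (S ∘ x) = C x) (hCfold : ∀ x, C (fold S A ∘ x) ≤ C x) :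
    ∫⁻ x, C x ∂foldedPlan S A γ ≤ ∫⁻ x, C x ∂γ := by
  have hf := measurable_fold hS hA
  rw [foldedPlan, lintegral_smul_measure, lintegral_add_measure,
    lintegral_map hC (measurable_comp_left hS), lintegral_map hC (measurable_comp_left hf)]
  simp only [hCS, lintegral_map hC (measurable_comp_left hf)]
  rw [← two_mul, smul_eq_mul, ← mul_assoc, ENNReal.inv_mul_cancel two_ne_zero ofNat_ne_top,
    one_mul]
  exact lintegral_mono hCfold

theorem foldedPlan_apply_eq_zero [Countable ι] (hS : Measurable S) (hSS : Function.Involutive S)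
    (hA : MeasurableSet A) (hAc : ∀ y ∉ A, S y ∈ A) (γ : Measure (ι → Ω)) :
    foldedPlan S A γ {x | ¬((∀ q, x q ∈ A) ∨ ∀ q, S (x q) ∈ A)} = 0 := by
  set B := {x : ι → Ω | ¬((∀ q, x q ∈ A) ∨ ∀ q, S (x q) ∈ A)}
  have hB : MeasurableSet B := measurableSet_setOfPred.2 (by fun_prop)
  have hF := measurable_comp_left (ι := ι) (measurable_fold hS hA)
  have hSl := measurable_comp_left (ι := ι) hS
  have h_fold : (fold S A ∘ ·) ⁻¹' B = ∅ :=
    eq_empty_of_forall_notMem fun x hx => hx (Or.inl fun q => fold_mem hAc (x q))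
  have h_reflect_fold : (fold S A ∘ ·) ⁻¹' ((S ∘ ·) ⁻¹' B) = ∅ :=
    eq_empty_of_forall_notMem fun x hx =>
      hx (Or.inr fun q => (hSS (fold S A (x q))).symm ▸ fold_mem hAc (x q))
  rw [foldedPlan, Measure.smul_apply, Measure.add_apply, Measure.map_apply hSl hB,
    Measure.map_apply hF hB, Measure.map_apply hF (hB.preimage hSl), h_fold, h_reflect_fold,
    measure_empty, add_zero, smul_zero]

end Reflection

section PairwiseCost

variable {ι Ω : Type*} [Fintype ι]

noncomputable def pairwiseCost (t : ι → ℝ) (c : Ω → Ω → ℝ) (p : ℝ) (x : ι → Ω) : ℝ≥0∞ :=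
  ∑ k, ∑ l, ENNReal.ofReal (t k * t l * c (x k) (x l) ^ p)

variable {t : ι → ℝ} {c : Ω → Ω → ℝ} {p : ℝ}

theorem measurable_pairwiseCost [MeasurableSpace Ω] (hc : Measurable (Function.uncurry c)) :
    Measurable (pairwiseCost t c p) := by
  have hkl (k l : ι) : Measurable fun x : ι → Ω => c (x k) (x l) :=
    hc.comp (f := fun x : ι → Ω => (x k, x l))
      ((measurable_pi_apply k).prodMk (measurable_pi_apply l))
  unfold pairwiseCost
  fun_prop

theorem pairwiseCost_comp_of_isometry {g : Ω → Ω} (hg : ∀ a b, c (g a) (g b) = c a b)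
    (x : ι → Ω) : pairwiseCost t c p (g ∘ x) = pairwiseCost t c p x := by
  simp only [pairwiseCost, Function.comp_apply, hg]

theorem pairwiseCost_comp_le (ht : ∀ q, 0 ≤ t q) (hc : ∀ a b, 0 ≤ c a b) (hp : 0 ≤ p)
    {g : Ω → Ω} (hg : ∀ a b, c (g a) (g b) ≤ c a b) (x : ι → Ω) :
    pairwiseCost t c p (g ∘ x) ≤ pairwiseCost t c p x := by
  unfold pairwiseCost
  gcongr with k _ l _
  · exact mul_nonneg (ht k) (ht l)
  · exact hc _ _
  · exact hg _ _

end PairwiseCost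

open Reflection in
theorem stmt_12_general {Ω : Type*} [MeasurableSpace Ω] {n : ℕ} (p : ℝ) (hp : 1 < p)
    (c : Ω → Ω → ℝ) (hc_nonneg : ∀ x y, 0 ≤ c x y)
    (hc_meas : Measurable (Function.uncurry c))
    (S : Ω → Ω) (hS_meas : Measurable S)
    (hS_isom : ∀ x y, c (S x) (S y) = c x y) (hS_invol : S ∘ S = id)
    (O1 O2 : Set Ω) (hO1 : MeasurableSet O1)
    (hunion : O1 ∪ O2 = univ)
    (hS12 : S '' O1 = O2) (hS21 : S '' O2 = O1)
    (hcost : ∀ x y, ((x ∈ O1 ∧ y ∈ O1) ∨ (x ∈ O2 ∧ y ∈ O2)) → c x y ≤ c (S x) y)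
    (μ : Fin n → Measure Ω)
    (hμ_inv : ∀ q, (μ q).map S = μ q)
    (t : Fin n → ℝ) (ht : (∀ q, 0 ≤ t q) ∧ ∑ q, t q = 1)
    (γ : Measure (Fin n → Ω))
    (hγ_plan : ∀ q, γ.map (fun x => x q) = μ q)
    (hγ_opt : ∀ γ' : Measure (Fin n → Ω), (∀ q, γ'.map (fun x => x q) = μ q) →
      ∫⁻ x, ∑ k, ∑ l, ENNReal.ofReal (t k * t l * c (x k) (x l) ^ p) ∂γ ≤
        ∫⁻ x, ∑ k, ∑ l, ENNReal.ofReal (t k * t l * c (x k) (x l) ^ p) ∂γ')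
    (hγ_unique : ∀ γ' : Measure (Fin n → Ω), (∀ q, γ'.map (fun x => x q) = μ q) →
      (∫⁻ x, ∑ k, ∑ l, ENNReal.ofReal (t k * t l * c (x k) (x l) ^ p) ∂γ' =
        ∫⁻ x, ∑ k, ∑ l, ENNReal.ofReal (t k * t l * c (x k) (x l) ^ p) ∂γ) → γ' = γ) :
    γ {x | ¬ ((∀ q, x q ∈ O1) ∨ (∀ q, x q ∈ O2))} = 0 := by
  have hSS : Function.Involutive S := congrFun hS_invol
  have hAc : ∀ y ∉ O1, S y ∈ O1 := fun y hy =>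
    hS21 ▸ mem_image_of_mem S ((hunion ▸ mem_univ y : y ∈ O1 ∪ O2).resolve_left hy)
  have hplan (q : Fin n) : (foldedPlan S O1 γ).map (fun x => x q) = μ q := by
    rw [map_eval_foldedPlan hS_meas hSS hO1 γ q (by rw [hγ_plan, hμ_inv]), hγ_plan]
  have hle : ∫⁻ x, pairwiseCost t c p x ∂foldedPlan S O1 γ ≤ ∫⁻ x, pairwiseCost t c p x ∂γ :=
    lintegral_foldedPlan_le hS_meas hO1 γ (measurable_pairwiseCost hc_meas)
      (pairwiseCost_comp_of_isometry hS_isom)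
      (pairwiseCost_comp_le ht.1 hc_nonneg (by linarith) <|
        cost_fold_le hS_isom hSS hAc fun x hx y hy => hcost x y (Or.inl ⟨hx, hy⟩))
  have hγ_eq := hγ_unique _ hplan (le_antisymm hle (hγ_opt _ hplan))
  refine measure_mono_null (fun x hx => ?_)
    (hγ_eq ▸ foldedPlan_apply_eq_zero hS_meas hSS hO1 hAc γ)
  rintro (h1 | h2)
  · exact hx (Or.inl h1)
  · exact hx (Or.inr fun q => hS12 ▸ ⟨S (x q), h2 q, hSS _⟩)

/-- If `S` is a reflection of `Ω` exchanging the two pieces `Ω₁, Ω₂` of a partition,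
with `c(x,y) ≤ c(S(x),y)` on `(Ω₁×Ω₁) ∪ (Ω₂×Ω₂)`, and the marginals are `S`-invariant,
then the unique optimal multi-marginal plan is supported in `Ω₁ⁿ ∪ Ω₂ⁿ`. -/
theorem stmt_12 {Ω : Type*} [MeasurableSpace Ω] {n : ℕ} (p : ℝ) (hp : 1 < p)
    (c : Ω → Ω → ℝ) (hc_nonneg : ∀ x y, 0 ≤ c x y)
    (hc_meas : Measurable (Function.uncurry c))
    (S : Ω → Ω) (hS_meas : Measurable S)
    (hS_isom : ∀ x y, c (S x) (S y) = c x y) (hS_invol : S ∘ S = id)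
    (O1 O2 : Set Ω) (hO1 : MeasurableSet O1) (hO2 : MeasurableSet O2)
    (hdisj : O1 ∩ O2 = ∅) (hunion : O1 ∪ O2 = univ)
    (hS12 : S '' O1 = O2) (hS21 : S '' O2 = O1)
    (hcost : ∀ x y, ((x ∈ O1 ∧ y ∈ O1) ∨ (x ∈ O2 ∧ y ∈ O2)) → c x y ≤ c (S x) y)
    (μ : Fin n → Measure Ω) (hμ_prob : ∀ q, IsProbabilityMeasure (μ q))
    (hμ_inv : ∀ q, (μ q).map S = μ q)
    (t : Fin n → ℝ) (ht : (∀ q, 0 ≤ t q) ∧ ∑ q, t q = 1)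
    (γ : Measure (Fin n → Ω))
    (hγ_plan : ∀ q, γ.map (fun x => x q) = μ q)
    (hγ_opt : ∀ γ' : Measure (Fin n → Ω), (∀ q, γ'.map (fun x => x q) = μ q) →
      ∫⁻ x, ∑ k, ∑ l, ENNReal.ofReal (t k * t l * c (x k) (x l) ^ p) ∂γ ≤
        ∫⁻ x, ∑ k, ∑ l, ENNReal.ofReal (t k * t l * c (x k) (x l) ^ p) ∂γ')
    (hγ_unique : ∀ γ' : Measure (Fin n → Ω), (∀ q, γ'.map (fun x => x q) = μ q) →
      (∫⁻ x, ∑ k, ∑ l, ENNReal.ofReal (t k * t l * c (x k) (x l) ^ p) ∂γ' =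
        ∫⁻ x, ∑ k, ∑ l, ENNReal.ofReal (t k * t l * c (x k) (x l) ^ p) ∂γ) → γ' = γ) :
    γ {x | ¬ ((∀ q, x q ∈ O1) ∨ (∀ q, x q ∈ O2))} = 0 :=
  stmt_12_general p hp c hc_nonneg hc_meas S hS_meas hS_isom hS_invol O1 O2 hO1 hunion hS12 hS21
    hcost μ hμ_inv t ht γ hγ_plan hγ_opt hγ_unique
end
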